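/- Basic existence theorem for MPEC: Let f : ℝ^n × ℝ^m → ℝ be continuous, let Z ⊆ ℝ^n × ℝ^m be closed, let F : ℝ^n × ℝ^m → ℝ^m be continuous, and let g_i : ℝ^n × ℝ^m → ℝ (i = 1,…,ℓ) be continuous, with g_i(x, ·) convex and differentiable in y and with ∇_y g_i jointly continuous. Define C(x) = {y : g_i(x,y) ≤ 0 for all i} and let S(x) be the set of y with y ∈ C(x) and ⟨F(x,y), v − y⟩ ≥ 0 for all v ∈ C(x). Let 𝓕 = {(x,y) ∈ Z : y ∈ S(x)}. Assume: (i) every (x, y) ∈ 𝓕 admits a KKT multiplier λ ∈ ℝ^ℓ (λ ≥ 0, F(x,y) + Σ_i λ_i ∇_y g_i(x,y) = 0, λ_i g_i(x,y) = 0); (ii) SBCQ holds: along every sequence in {(x,y) : a KKT multiplier exists} converging in ℝ^n × ℝ^m, KKT multipliers can be chosen bounded; (iii) for some α ∈ ℝ the level set {(x,y) ∈ 𝓕 : f(x,y) ≤ α} is nonempty and bounded. Then f attains a global minimum over 𝓕. -/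

import Mathlib

/-!
Every feasible point admits a KKT multiplier, and conversely, because the lower-level constraints
are convex, the gradient inequality turns a KKT multiplier at `(x, y)` into a certificate that `y`
solves the variational inequality. So the feasible region is `Z` intersected with the set of KKT
points. The relation "λ is a KKT multiplier at p" is closed by continuity of the data; along a
convergent sequence of KKT points SBCQ supplies bounded multipliers, a subsequence of which
converges, so the set of KKT points is closed. The level set is then compact and Weierstrass
applies.
-/

open scoped Topology

/-- `lam` is a KKT multiplier for the pair `p = (x, y)`. -/
def IsKKTMultiplier {n m ℓ : ℕ}
    (F : EuclideanSpace ℝ (Fin n) → EuclideanSpace ℝ (Fin m) → EuclideanSpace ℝ (Fin m))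
    (g : Fin ℓ → EuclideanSpace ℝ (Fin n) → EuclideanSpace ℝ (Fin m) → ℝ)
    (p : EuclideanSpace ℝ (Fin n) × EuclideanSpace ℝ (Fin m))
    (lam : Fin ℓ → ℝ) : Prop :=
  F p.1 p.2 + ∑ i, lam i • gradient (g i p.1) p.2 = 0 ∧
    ∀ i, 0 ≤ lam i ∧ g i p.1 p.2 ≤ 0 ∧ lam i * g i p.1 p.2 = 0

open Set Filter Function

section Convex

variable {E : Type*} [NormedAddCommGroup E]

theorem ConvexOn.hasFDerivAt_apply_sub_le [NormedSpace ℝ E] {g : E → ℝ} {g' : E →L[ℝ] ℝ} {y : E}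
    (hc : ConvexOn ℝ univ g) (hg : HasFDerivAt g g' y) (v : E) :
    g' (v - y) ≤ g v - g y := by
  have hφ : HasDerivAt (g ∘ AffineMap.lineMap y v) (g' (v - y)) (0 : ℝ) := by
    rw [← AffineMap.lineMap_apply_zero y v (k := ℝ)] at hg
    exact hg.comp_hasDerivAt 0 AffineMap.hasDerivAt_lineMap
  simpa [slope_def_field] using
    (hc.comp_affineMap (AffineMap.lineMap y v)).le_slope_of_hasDerivAt
      (mem_univ 0) (mem_univ 1) zero_lt_one hφ

theorem ConvexOn.inner_gradient_sub_le [InnerProductSpace ℝ E] [CompleteSpace E] {g : E → ℝ}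
    {y : E} (hc : ConvexOn ℝ univ g) (hg : DifferentiableAt ℝ g y) (v : E) :
    inner ℝ (gradient g y) (v - y) ≤ g v - g y := by
  simpa using hc.hasFDerivAt_apply_sub_le
    (hasGradientAt_iff_hasFDerivAt.mp hg.hasGradientAt) v

end Convex

section KKT

variable {n m ℓ : ℕ}
  {F : EuclideanSpace ℝ (Fin n) → EuclideanSpace ℝ (Fin m) → EuclideanSpace ℝ (Fin m)}
  {g : Fin ℓ → EuclideanSpace ℝ (Fin n) → EuclideanSpace ℝ (Fin m) → ℝ}

def SatisfiesSBCQ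
    (F : EuclideanSpace ℝ (Fin n) → EuclideanSpace ℝ (Fin m) → EuclideanSpace ℝ (Fin m))
    (g : Fin ℓ → EuclideanSpace ℝ (Fin n) → EuclideanSpace ℝ (Fin m) → ℝ) : Prop :=
  ∀ (p : ℕ → EuclideanSpace ℝ (Fin n) × EuclideanSpace ℝ (Fin m))
    (pbar : EuclideanSpace ℝ (Fin n) × EuclideanSpace ℝ (Fin m)),
    (∀ k, ∃ lam : Fin ℓ → ℝ, IsKKTMultiplier F g (p k) lam) →
    Tendsto p atTop (𝓝 pbar) →
    ∃ lam : ℕ → Fin ℓ → ℝ, (∀ k, IsKKTMultiplier F g (p k) (lam k)) ∧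
      ∃ B : ℝ, ∀ k, ‖lam k‖ ≤ B

theorem IsKKTMultiplier.inner_nonneg {x : EuclideanSpace ℝ (Fin n)}
    {y : EuclideanSpace ℝ (Fin m)} {lam : Fin ℓ → ℝ} (h : IsKKTMultiplier F g (x, y) lam)
    (hconv : ∀ i, ConvexOn ℝ univ (g i x)) (hdiff : ∀ i, DifferentiableAt ℝ (g i x) y)
    {v : EuclideanSpace ℝ (Fin m)} (hv : ∀ i, g i x v ≤ 0) :
    0 ≤ inner ℝ (F x y) (v - y) := by
  obtain ⟨hstat, hsign⟩ := h
  have hterm : ∀ i, lam i * inner ℝ (gradient (g i x) y) (v - y) ≤ 0 := fun i => by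
    obtain ⟨hnn, -, hcompl⟩ := hsign i
    calc lam i * inner ℝ (gradient (g i x) y) (v - y)
        ≤ lam i * (g i x v - g i x y) :=
          mul_le_mul_of_nonneg_left ((hconv i).inner_gradient_sub_le (hdiff i) v) hnn
      _ = lam i * g i x v := by rw [mul_sub, hcompl, sub_zero]
      _ ≤ 0 := mul_nonpos_of_nonneg_of_nonpos hnn (hv i)
  rw [eq_neg_of_add_eq_zero_left hstat, inner_neg_left, sum_inner, neg_nonneg]
  exact Finset.sum_nonpos fun i _ => by simpa only [real_inner_smul_left] using hterm i

theorem isClosed_setOf_isKKTMultiplier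
    (hF : Continuous (uncurry F)) (hg : ∀ i, Continuous (uncurry (g i)))
    (hggrad : ∀ i, Continuous (uncurry fun x => gradient (g i x))) :
    IsClosed {q : (EuclideanSpace ℝ (Fin n) × EuclideanSpace ℝ (Fin m)) × (Fin ℓ → ℝ) |
      IsKKTMultiplier F g q.1 q.2} := by
  have hg' : ∀ i, Continuous fun q : (EuclideanSpace ℝ (Fin n) × EuclideanSpace ℝ (Fin m)) ×
      (Fin ℓ → ℝ) => g i q.1.1 q.1.2 := fun i => (hg i).comp continuous_fst
  have hlam : ∀ i, Continuous fun q : (EuclideanSpace ℝ (Fin n) × EuclideanSpace ℝ (Fin m)) ×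
      (Fin ℓ → ℝ) => q.2 i := fun i => (continuous_apply i).comp continuous_snd
  simp only [IsKKTMultiplier, ofPred_and, ofPred_forall]
  refine (isClosed_eq ?_ continuous_const).inter <| isClosed_iInter fun i =>
    (isClosed_le continuous_const (hlam i)).inter <|
      (isClosed_le (hg' i) continuous_const).inter <|
        isClosed_eq ((hlam i).mul (hg' i)) continuous_const
  exact (hF.comp continuous_fst).add <| continuous_finsetSum _ fun i _ =>
    (hlam i).smul ((hggrad i).comp continuous_fst)

theorem SatisfiesSBCQ.isClosed_setOf_exists_isKKTMultiplier (hSBCQ : SatisfiesSBCQ F g)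
    (hF : Continuous (uncurry F)) (hg : ∀ i, Continuous (uncurry (g i)))
    (hggrad : ∀ i, Continuous (uncurry fun x => gradient (g i x))) :
    IsClosed {p | ∃ lam, IsKKTMultiplier F g p lam} := by
  refine IsSeqClosed.isClosed fun p pbar hp hlim => ?_
  obtain ⟨lam, hlam, B, hB⟩ := hSBCQ p pbar hp hlim
  obtain ⟨lbar, -, φ, hφ, hlim_lam⟩ := (isCompact_closedBall (0 : Fin ℓ → ℝ) B).tendsto_subseq
    fun k => mem_closedBall_zero_iff.mpr (hB k)
  exact ⟨lbar, (isClosed_setOf_isKKTMultiplier hF hg hggrad).mem_of_tendsto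
    ((hlim.comp hφ.tendsto_atTop).prodMk_nhds hlim_lam) (Eventually.of_forall fun k => hlam (φ k))⟩

end KKT

theorem IsClosed.exists_isMinOn_of_isBounded_sublevel {E : Type*} [PseudoMetricSpace E]
    [ProperSpace E] {s : Set E} {f : E → ℝ} {α : ℝ} (hs : IsClosed s) (hf : ContinuousOn f s)
    (hne : {x ∈ s | f x ≤ α}.Nonempty) (hbdd : Bornology.IsBounded {x ∈ s | f x ≤ α}) :
    ∃ x ∈ s, IsMinOn f s x := by
  have hcompact : IsCompact {x ∈ s | f x ≤ α} := hbdd.isCompact_closure.of_isClosed_subset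
    (hs.isClosed_le hf continuousOn_const) subset_closure
  obtain ⟨x, ⟨hxs, hxα⟩, hmin⟩ := hcompact.exists_isMinOn hne (hf.mono (sep_subset _ _))
  refine ⟨x, hxs, fun y hys => ?_⟩
  rcases le_total (f y) α with hyα | hαy
  exacts [hmin ⟨hys, hyα⟩, hxα.trans hαy]

/-- Basic existence theorem for MPEC: continuous objective, closed joint
constraint set, convex differentiable lower-level constraints, KKT multipliers
on the feasible region, SBCQ, and a nonempty bounded level set imply that the
objective attains a global minimum over the MPEC feasible region. -/
theorem mpec_basic_existence {n m ℓ : ℕ}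
    (f : EuclideanSpace ℝ (Fin n) × EuclideanSpace ℝ (Fin m) → ℝ)
    (hf : Continuous f)
    (Z : Set (EuclideanSpace ℝ (Fin n) × EuclideanSpace ℝ (Fin m)))
    (hZ : IsClosed Z)
    (F : EuclideanSpace ℝ (Fin n) → EuclideanSpace ℝ (Fin m) → EuclideanSpace ℝ (Fin m))
    (hF : Continuous fun p : EuclideanSpace ℝ (Fin n) × EuclideanSpace ℝ (Fin m) => F p.1 p.2)
    (g : Fin ℓ → EuclideanSpace ℝ (Fin n) → EuclideanSpace ℝ (Fin m) → ℝ)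
    (hg : ∀ i, Continuous fun p : EuclideanSpace ℝ (Fin n) × EuclideanSpace ℝ (Fin m) =>
      g i p.1 p.2)
    (hgconv : ∀ i x, ConvexOn ℝ Set.univ (g i x))
    (hgdiff : ∀ i x, Differentiable ℝ (g i x))
    (hggrad : ∀ i, Continuous fun p : EuclideanSpace ℝ (Fin n) × EuclideanSpace ℝ (Fin m) =>
      gradient (g i p.1) p.2)
    (C : EuclideanSpace ℝ (Fin n) → Set (EuclideanSpace ℝ (Fin m)))
    (hC : ∀ x, C x = {y | ∀ i, g i x y ≤ 0})
    (S : EuclideanSpace ℝ (Fin n) → Set (EuclideanSpace ℝ (Fin m)))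
    (hS : ∀ x, S x = {y | y ∈ C x ∧ ∀ v ∈ C x, (0 : ℝ) ≤ inner ℝ (F x y) (v - y)})
    (Feas : Set (EuclideanSpace ℝ (Fin n) × EuclideanSpace ℝ (Fin m)))
    (hFeas : Feas = {p | p ∈ Z ∧ p.2 ∈ S p.1})
    (hmult : ∀ p ∈ Feas, ∃ lam : Fin ℓ → ℝ, IsKKTMultiplier F g p lam)
    (hSBCQ : ∀ (p : ℕ → EuclideanSpace ℝ (Fin n) × EuclideanSpace ℝ (Fin m))
      (pbar : EuclideanSpace ℝ (Fin n) × EuclideanSpace ℝ (Fin m)),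
      (∀ k, ∃ lam : Fin ℓ → ℝ, IsKKTMultiplier F g (p k) lam) →
      Filter.Tendsto p Filter.atTop (𝓝 pbar) →
      ∃ lam : ℕ → Fin ℓ → ℝ, (∀ k, IsKKTMultiplier F g (p k) (lam k)) ∧
        ∃ B : ℝ, ∀ k, ‖lam k‖ ≤ B)
    (α : ℝ)
    (hlevel_ne : {p ∈ Feas | f p ≤ α}.Nonempty)
    (hlevel_bdd : Bornology.IsBounded {p ∈ Feas | f p ≤ α}) :
    ∃ p ∈ Feas, ∀ q ∈ Feas, f p ≤ f q := by
  have hKKT_sol : ∀ p : EuclideanSpace ℝ (Fin n) × EuclideanSpace ℝ (Fin m),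
      (∃ lam, IsKKTMultiplier F g p lam) → p.2 ∈ S p.1 := by
    rintro p ⟨lam, hlam⟩
    rw [hS, hC]
    exact ⟨fun i => (hlam.2 i).2.1, fun v hv => hlam.inner_nonneg
      (fun i => hgconv i p.1) (fun i => (hgdiff i p.1).differentiableAt) hv⟩
  have hFeas_eq : Feas = Z ∩ {p | ∃ lam, IsKKTMultiplier F g p lam} := by
    subst hFeas
    exact Subset.antisymm (fun p hp => ⟨hp.1, hmult p hp⟩) fun p hp => ⟨hp.1, hKKT_sol p hp.2⟩
  have hclosed : IsClosed Feas := hFeas_eq ▸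
    hZ.inter (SatisfiesSBCQ.isClosed_setOf_exists_isKKTMultiplier hSBCQ hF hg hggrad)
  obtain ⟨p, hp, hmin⟩ :=
    hclosed.exists_isMinOn_of_isBounded_sublevel hf.continuousOn hlevel_ne hlevel_bdd
  exact ⟨p, hp, isMinOn_iff.mp hmin⟩
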